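/- arXiv:2209.00515 — 2 statements merged into one kernel-verified Lean document; each statement's English description precedes it below -/
import Mathlib

section
/- If X has law F with finite first moment and mean m_X > 0, and c > 0 is a constant, then T(X + c) ≤ (m_X/(m_X + c)) T(X) < T(X) whenever T(X) > 0; in particular adding a positive constant strictly decreases the inequality index. -/
open MeasureTheory Complex

/-- Fourier transform `f̂(ξ) = ∫ e^{-iξx} dF(x)` of a measure on `ℝ`. -/
noncomputable def ft (μ : Measure ℝ) (ξ : ℝ) : ℂ :=
  ∫ x, Complex.exp (-(Complex.I * ξ * x)) ∂μ

/-- Derivative of the Fourier transform: `f̂'(ξ) = -i ∫ x e^{-iξx} dF(x)`. -/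
noncomputable def ft' (μ : Measure ℝ) (ξ : ℝ) : ℂ :=
  ∫ x, -(Complex.I * x) * Complex.exp (-(Complex.I * ξ * x)) ∂μ

/-- The Fourier-based inequality index `T(F) = (1/2) sup_ξ |f̂(ξ) - f̂'(ξ)/f̂'(0)|`. -/
noncomputable def Tindex (μ : Measure ℝ) : ℝ :=
  (1 / 2) * ⨆ ξ : ℝ, ‖ft μ ξ - ft' μ ξ / ft' μ 0‖

/-!
Translating `X` by `c` multiplies `f̂` by the unimodular factor `e^{-icξ}` and turns `f̂'` into
`e^{-icξ} (f̂' - i c f̂)`, while `f̂'(0) = -i m_X` becomes `-i (m_X + c)`. A short computation then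
gives, pointwise in `ξ`,
`f̂_{X+c} - f̂'_{X+c}/f̂'_{X+c}(0) = e^{-icξ} · m_X/(m_X + c) · (f̂_X - f̂'_X/f̂'_X(0))`,
so `T(X + c) = m_X/(m_X + c) · T(X)` exactly, and `m_X/(m_X + c) < 1` for `c > 0`.
-/

lemma norm_cexp_neg_I_mul (ξ x : ℝ) : ‖Complex.exp (-(Complex.I * ξ * x))‖ = 1 := by
  rw [Complex.norm_exp]
  simp

lemma continuous_cexp_neg_I_mul (ξ : ℝ) :
    Continuous fun x : ℝ => Complex.exp (-(Complex.I * ξ * x)) := by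
  fun_prop

lemma continuous_ft'_integrand (ξ : ℝ) :
    Continuous fun x : ℝ => -(Complex.I * x) * Complex.exp (-(Complex.I * ξ * x)) := by
  fun_prop

lemma integrable_cexp_neg_I_mul (μ : Measure ℝ) [IsFiniteMeasure μ] (ξ : ℝ) :
    Integrable (fun x : ℝ => Complex.exp (-(Complex.I * ξ * x))) μ := by
  refine (integrable_const (1 : ℝ)).mono' (continuous_cexp_neg_I_mul ξ).aestronglyMeasurable ?_
  filter_upwards with x
  rw [norm_cexp_neg_I_mul]

lemma integrable_ft'_integrand (μ : Measure ℝ) (hint : Integrable (fun x : ℝ => x) μ) (ξ : ℝ) :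
    Integrable (fun x : ℝ => -(Complex.I * x) * Complex.exp (-(Complex.I * ξ * x))) μ := by
  refine hint.abs.mono' (continuous_ft'_integrand ξ).aestronglyMeasurable ?_
  filter_upwards with x
  simp [norm_cexp_neg_I_mul]

lemma ft'_zero (μ : Measure ℝ) : ft' μ 0 = -(Complex.I * (∫ x, x ∂μ : ℝ)) := by
  simp only [ft', ofReal_zero, mul_zero, zero_mul, neg_zero, Complex.exp_zero, mul_one,
    integral_neg, integral_const_mul]
  exact congrArg (fun z => -(Complex.I * z)) integral_ofReal

lemma ft_map_add_const (μ : Measure ℝ) (c ξ : ℝ) :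
    ft (Measure.map (fun x => x + c) μ) ξ = Complex.exp (-(Complex.I * ξ * c)) * ft μ ξ := by
  rw [ft, integral_map (measurable_add_const c).aemeasurable
    (continuous_cexp_neg_I_mul ξ).aestronglyMeasurable, ft, ← integral_const_mul]
  congr 1 with x
  rw [← Complex.exp_add]
  push_cast
  ring_nf

lemma ft'_map_add_const (μ : Measure ℝ) [IsFiniteMeasure μ]
    (hint : Integrable (fun x : ℝ => x) μ) (c ξ : ℝ) :
    ft' (Measure.map (fun x => x + c) μ) ξ =
      Complex.exp (-(Complex.I * ξ * c)) * (ft' μ ξ + -(Complex.I * c) * ft μ ξ) := by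
  have hsplit : ∀ x : ℝ,
      -(Complex.I * (x + c : ℝ)) * Complex.exp (-(Complex.I * ξ * (x + c : ℝ))) =
        Complex.exp (-(Complex.I * ξ * c)) * (-(Complex.I * x) * Complex.exp (-(Complex.I * ξ * x)))
          + Complex.exp (-(Complex.I * ξ * c)) * (-(Complex.I * c)) *
            Complex.exp (-(Complex.I * ξ * x)) := by
    intro x
    push_cast
    rw [show Complex.I * ξ * (x + c) = Complex.I * ξ * c + Complex.I * ξ * x by ring,
      neg_add, Complex.exp_add]
    ring
  rw [ft', integral_map (measurable_add_const c).aemeasurable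
    (continuous_ft'_integrand ξ).aestronglyMeasurable]
  simp_rw [hsplit]
  rw [integral_add ((integrable_ft'_integrand μ hint ξ).const_mul _)
      ((integrable_cexp_neg_I_mul μ ξ).const_mul _),
    integral_const_mul, integral_const_mul, ft', ft]
  ring

lemma integral_id_map_add_const (μ : Measure ℝ) [IsProbabilityMeasure μ]
    (hint : Integrable (fun x : ℝ => x) μ) (c : ℝ) :
    ∫ x, x ∂(Measure.map (fun x => x + c) μ) = (∫ x, x ∂μ) + c := by
  rw [integral_map (measurable_add_const c).aemeasurable
    (f := fun x => x) aestronglyMeasurable_id, integral_add hint (integrable_const c)]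
  simp

lemma Tindex_map_add_const (μ : Measure ℝ) [IsProbabilityMeasure μ]
    (hint : Integrable (fun x : ℝ => x) μ) {m : ℝ} (hmean : ∫ x, x ∂μ = m) (hm : m ≠ 0)
    {c : ℝ} (hmc : m + c ≠ 0) :
    Tindex (Measure.map (fun x => x + c) μ) = |m / (m + c)| * Tindex μ := by
  set ν := Measure.map (fun x => x + c) μ
  have hm' : (m : ℂ) ≠ 0 := by exact_mod_cast hm
  have hmc' : (m : ℂ) + c ≠ 0 := by exact_mod_cast hmc
  have hpointwise : ∀ ξ : ℝ,
      ‖ft ν ξ - ft' ν ξ / ft' ν 0‖ = |m / (m + c)| * ‖ft μ ξ - ft' μ ξ / ft' μ 0‖ := by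
    intro ξ
    have hexpr : ft ν ξ - ft' ν ξ / ft' ν 0 =
        Complex.exp (-(Complex.I * ξ * c)) * ((m / (m + c) : ℝ) : ℂ) *
          (ft μ ξ - ft' μ ξ / ft' μ 0) := by
      rw [ft_map_add_const, ft'_map_add_const μ hint, ft'_zero, ft'_zero,
        integral_id_map_add_const μ hint, hmean]
      push_cast
      field_simp [Complex.I_ne_zero, hm', hmc']
      ring
    rw [hexpr, norm_mul, norm_mul, norm_cexp_neg_I_mul, one_mul, Complex.norm_real,
      Real.norm_eq_abs]
  rw [Tindex, Tindex, iSup_congr hpointwise, ← Real.mul_iSup_of_nonneg (abs_nonneg _)]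
  ring

theorem stmt_5 (μ : Measure ℝ) [IsProbabilityMeasure μ]
    (hint : Integrable (fun x : ℝ => x) μ)
    (mX : ℝ) (hmX : mX = ∫ x, x ∂μ) (hmXpos : 0 < mX)
    (c : ℝ) (hc : 0 < c) :
    Tindex (Measure.map (fun x => x + c) μ) ≤ mX / (mX + c) * Tindex μ ∧
      (0 < Tindex μ → Tindex (Measure.map (fun x => x + c) μ) < Tindex μ) := by
  have hk_nonneg : 0 ≤ mX / (mX + c) := by positivity
  have hk_lt_one : mX / (mX + c) < 1 := by
    rw [div_lt_one (by positivity)]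
    linarith
  rw [Tindex_map_add_const μ hint hmX.symm hmXpos.ne' (by positivity), abs_of_nonneg hk_nonneg]
  exact ⟨le_rfl, fun hpos => mul_lt_of_lt_one_left hpos hk_lt_one⟩
end

section
/- If F is the Poisson distribution with parameter λ > 0, then T(F) = e^{-2λ} when λ ≤ 1/4, and T(F) = e^{-1/2}/(2√λ) when λ > 1/4. -/
open MeasureTheory Complex

/-!
For `z = e^{-iξ}` the Poisson transform is `f̂(ξ) = exp(λ(z - 1))`, and `f̂` is differentiable with
`f̂' = -iλ z f̂` because the law has a finite mean; hence `f̂ - f̂'/f̂'(0) = (1 - z) f̂`. Since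
`|z| = 1`, `Re(z - 1) = -|1 - z|²/2`, so the modulus is `u e^{-λu²/2}` with `u = |1 - z|`, and `u`
sweeps out `[0, 2]`. From `t ≤ exp((t² - 1)/2)`, i.e. `1 + s ≤ eˢ`, the function `u e^{-λu²/2}` is
at most `e^{-1/2}/√λ`, attained at `u = λ^{-1/2}`, which lies in `[0, 2]` exactly when `λ ≥ 1/4`;
for `λ ≤ 1/4` it is increasing on `[0, 2]` and the maximum `2e^{-2λ}` is attained at `u = 2`.
-/

open ProbabilityTheory Real
open scoped NNReal Nat

lemma le_exp_sq_sub_one_div_two (t : ℝ) : t ≤ rexp ((t ^ 2 - 1) / 2) := by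
  nlinarith [add_one_le_exp ((t ^ 2 - 1) / 2), sq_nonneg (t - 1)]

lemma mul_exp_neg_mul_sq_div_two_le {r : ℝ} (hr : 0 < r) (u : ℝ) :
    u * rexp (-(r * u ^ 2 / 2)) ≤ rexp (-(1 / 2)) / √r := by
  have h := le_exp_sq_sub_one_div_two (u * √r)
  rw [mul_pow, sq_sqrt hr.le] at h
  rw [le_div_iff₀ (sqrt_pos.2 hr)]
  calc u * rexp (-(r * u ^ 2 / 2)) * √r = u * √r * rexp (-(r * u ^ 2 / 2)) := by ring
    _ ≤ rexp ((u ^ 2 * r - 1) / 2) * rexp (-(r * u ^ 2 / 2)) := by gcongr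
    _ = rexp (-(1 / 2)) := by rw [← Real.exp_add]; ring_nf

lemma mul_exp_neg_mul_sq_div_two_le_of_le_two {r u : ℝ} (hr : r ≤ 1 / 4) (hu₀ : 0 ≤ u)
    (hu : u ≤ 2) : u * rexp (-(r * u ^ 2 / 2)) ≤ 2 * rexp (-(2 * r)) := by
  have hsq : (u / 2) ^ 2 ≤ 1 := by nlinarith
  have h : u / 2 ≤ rexp (2 * r * ((u / 2) ^ 2 - 1)) :=
    (le_exp_sq_sub_one_div_two _).trans
      (exp_le_exp.2 (by nlinarith [mul_nonneg (sub_nonneg.2 hr) (sub_nonneg.2 hsq)]))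
  calc u * rexp (-(r * u ^ 2 / 2)) = 2 * (u / 2) * rexp (-(r * u ^ 2 / 2)) := by ring
    _ ≤ 2 * rexp (2 * r * ((u / 2) ^ 2 - 1)) * rexp (-(r * u ^ 2 / 2)) := by gcongr
    _ = 2 * rexp (-(2 * r)) := by rw [mul_assoc, ← Real.exp_add]; ring_nf

lemma iSup_mul_exp_neg_mul_sq_div_two {ι : Type*} {u : ι → ℝ}
    (hu : Set.range u = Set.Icc 0 2) {r : ℝ} (hr : 0 < r) :
    ⨆ i, u i * rexp (-(r * u i ^ 2 / 2)) =
      if r ≤ 1 / 4 then 2 * rexp (-(2 * r)) else rexp (-(1 / 2)) / √r := by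
  have hmem : ∀ i, u i ∈ Set.Icc 0 2 := fun i => hu ▸ Set.mem_range_self i
  have : Nonempty ι := Set.range_nonempty_iff_nonempty.1 (hu ▸ Set.nonempty_Icc.2 zero_le_two)
  split_ifs with h
  · obtain ⟨i, hi⟩ := hu.symm ▸ Set.right_mem_Icc.2 zero_le_two
    refine ciSup_eq_of_forall_le_of_forall_lt_exists_gt
      (fun i => mul_exp_neg_mul_sq_div_two_le_of_le_two h (hmem i).1 (hmem i).2)
      fun w hw => ⟨i, hw.trans_eq ?_⟩
    rw [hi]; ring_nf
  · have hsr : 0 < √r := sqrt_pos.2 hr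
    obtain ⟨i, hi⟩ : (√r)⁻¹ ∈ Set.range u := hu ▸ ⟨by positivity, by
      rw [inv_le_comm₀ hsr two_pos, le_sqrt (by norm_num) hr.le]; linarith⟩
    refine ciSup_eq_of_forall_le_of_forall_lt_exists_gt
      (fun i => mul_exp_neg_mul_sq_div_two_le hr _)
      fun w hw => ⟨i, hw.trans_eq ?_⟩
    rw [hi, inv_pow, sq_sqrt hr.le, mul_inv_cancel₀ hr.ne']
    ring_nf

lemma norm_sub_one_sq_of_norm_eq_one {z : ℂ} (hz : ‖z‖ = 1) : ‖z - 1‖ ^ 2 = 2 * (1 - z.re) := by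
  rw [← sq_eq_sq₀ (norm_nonneg _) zero_le_one, Complex.sq_norm, normSq_apply, one_pow] at hz
  rw [Complex.sq_norm, normSq_apply]
  simp only [sub_re, one_re, sub_im, one_im, sub_zero]
  linarith

lemma range_norm_cexp_neg_mul_I_sub_one :
    Set.range (fun ξ : ℝ => ‖cexp (-ξ * I) - 1‖) = Set.Icc 0 2 := by
  ext u
  constructor
  · rintro ⟨ξ, rfl⟩
    refine ⟨norm_nonneg _, ?_⟩
    simpa [← ofReal_neg, norm_exp_ofReal_mul_I, one_add_one_eq_two] using
      norm_sub_le (cexp (↑(-ξ) * I)) 1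
  · rintro ⟨hu₀, hu⟩
    refine ⟨-(2 * arcsin (u / 2)), ?_⟩
    dsimp only
    rw [ofReal_neg, neg_neg, mul_comm _ I, norm_exp_I_mul_ofReal_sub_one,
      mul_div_cancel_left₀ _ two_ne_zero, sin_arcsin (by linarith) (by linarith),
      mul_div_cancel₀ _ two_ne_zero, Real.norm_of_nonneg hu₀]

lemma ft_eq_charFun (μ : Measure ℝ) (ξ : ℝ) : ft μ ξ = charFun μ (-ξ) := by
  rw [charFun_apply_real, ft]
  congr with x
  push_cast
  ring_nf

lemma hasDerivAt_ft {μ : Measure ℝ} [IsFiniteMeasure μ] (hμ : Integrable id μ) (ξ : ℝ) :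
    HasDerivAt (ft μ) (ft' μ ξ) ξ := by
  have hμ' : MemLp id (1 : ℕ) μ := by simpa using memLp_one_iff_integrable.2 hμ
  have h := ((contDiff_charFun hμ').differentiable one_ne_zero (-ξ)).hasDerivAt.scomp ξ
    (hasDerivAt_neg ξ)
  rw [← iteratedDeriv_one, iteratedDeriv_charFun hμ'] at h
  rw [show ft μ = charFun μ ∘ Neg.neg from funext (ft_eq_charFun μ)]
  refine h.congr_deriv ?_
  rw [ft', pow_one, neg_one_smul, ← integral_const_mul, ← integral_neg]
  congr with x
  push_cast
  ring_nf

lemma integrable_id_map_cast_poissonMeasure (r : ℝ≥0) : Integrable id Po(ℝ, r) := by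
  rw [integrable_map_measure aestronglyMeasurable_id measurable_from_nat.aemeasurable,
    integrable_poissonMeasure_iff]
  refine Summable.of_nonneg_of_le (fun n => by positivity) (fun n => ?_)
    ((summable_pow_div_factorial (2 * r)).mul_left (rexp (-r)))
  have hn : (n : ℝ) ≤ 2 ^ n := by exact_mod_cast Nat.lt_two_pow_self.le
  simp only [Function.comp_apply, id, Real.norm_natCast, mul_pow]
  calc rexp (-r) * r ^ n / n ! * n = rexp (-r) * (n * r ^ n / n !) := by ring
    _ ≤ rexp (-r) * (2 ^ n * r ^ n / n !) := by gcongr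

lemma ft_map_cast_poissonMeasure (r : ℝ≥0) (ξ : ℝ) :
    ft Po(ℝ, r) ξ = cexp (r * (cexp (-ξ * I) - 1)) := by
  rw [ft_eq_charFun, charFun_map_cast_poissonMeasure]
  push_cast
  rfl

lemma ft'_map_cast_poissonMeasure (r : ℝ≥0) (ξ : ℝ) :
    ft' Po(ℝ, r) ξ = -I * r * cexp (-ξ * I) * cexp (r * (cexp (-ξ * I) - 1)) := by
  have h : HasDerivAt (fun ξ : ℝ => cexp (r * (cexp (-ξ * I) - 1)))
      (cexp (r * (cexp (-ξ * I) - 1)) * (r * (cexp (-ξ * I) * (-1 * I)))) ξ :=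
    ((((hasDerivAt_id (ξ : ℂ)).neg.mul_const I).cexp.sub_const 1).const_mul
      (r : ℂ)).cexp.comp_ofReal
  have hft := hasDerivAt_ft (integrable_id_map_cast_poissonMeasure r) ξ
  rw [funext (ft_map_cast_poissonMeasure r)] at hft
  rw [hft.unique h]
  ring

lemma norm_ft_sub_ft'_div_ft'_zero_map_cast_poissonMeasure {r : ℝ≥0} (hr : 0 < r) (ξ : ℝ) :
    ‖ft Po(ℝ, r) ξ - ft' Po(ℝ, r) ξ / ft' Po(ℝ, r) 0‖ =
      ‖cexp (-ξ * I) - 1‖ * rexp (-(r * ‖cexp (-ξ * I) - 1‖ ^ 2 / 2)) := by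
  have h0 : ft' Po(ℝ, r) 0 = -I * r := by simp [ft'_map_cast_poissonMeasure]
  have hr' : ((r : ℝ) : ℂ) ≠ 0 := by exact_mod_cast hr.ne'
  have hz : ‖cexp (↑(-ξ) * I)‖ = 1 := norm_exp_ofReal_mul_I _
  rw [ft_map_cast_poissonMeasure, ft'_map_cast_poissonMeasure, h0, ← ofReal_neg]
  set z := cexp (↑(-ξ) * I)
  have hdiff : cexp (r * (z - 1)) - -I * r * z * cexp (r * (z - 1)) / (-I * r) =
      cexp (r * (z - 1)) * -(z - 1) := by
    field_simp
    ring
  have hre : (r * (z - 1) : ℂ).re = -(r * ‖z - 1‖ ^ 2 / 2) := by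
    rw [norm_sub_one_sq_of_norm_eq_one hz, re_ofReal_mul, sub_re, one_re]
    ring
  rw [hdiff, norm_mul, norm_exp, hre, norm_neg, mul_comm]

theorem stmt_9 (l : NNReal) (hl : 0 < l) :
    Tindex (Measure.map (fun n : ℕ => (n : ℝ)) (ProbabilityTheory.poissonMeasure l))
      = if (l : ℝ) ≤ 1 / 4 then Real.exp (-2 * l)
        else Real.exp (-(1 / 2)) / (2 * Real.sqrt l) := by
  rw [Tindex]
  simp_rw [norm_ft_sub_ft'_div_ft'_zero_map_cast_poissonMeasure hl]
  rw [iSup_mul_exp_neg_mul_sq_div_two range_norm_cexp_neg_mul_I_sub_one (NNReal.coe_pos.2 hl)]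
  split_ifs
  · ring_nf
  · field_simp
end
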